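/- arXiv:1010.4123 — 3 statements merged into one kernel-verified Lean document; each statement's English description precedes it below -/
import Mathlib

section
/- Let $F$ be the CDF of the chi-squared distribution with 1 degree of freedom and $G(v)=1-e^{-v}$ the standard exponential CDF, and set $\tilde H=F^{-1}\circ G$ on $(0,\infty)$. Then the derivative $\tilde H'$ is positive, increasing, concave on $(0,\infty)$, and $\tilde H'(v)\to 2$ as $v\to\infty$. -/
open Filter Real Set

/-- The CDF of the chi-squared distribution with one degree of freedom. -/
noncomputable def chi1CDF (y : ℝ) : ℝ :=
  ∫ t in (0:ℝ)..y, t ^ (-(1:ℝ)/2) * Real.exp (-t/2) / Real.sqrt (2 * π)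

/-!
Let `ψ = (1 - F) / F'` be the Mills ratio of `χ²₁`. Since `-log (1 - F (H̃ v)) = v`, the inverse
function theorem gives `H̃' = ψ ∘ H̃`, and `ψ` solves the linear ODE
`ψ' = (x + 1) / (2 x) ψ - 1`. An integrating-factor comparison with strict sub- and
supersolutions traps `ψ` between `2x / (x + 1)` and the larger root `U(x) ≤ 2` of
`Q(p) = (x + 2) p² - 3 (x + 1) p + 2 x`. The lower bound gives `ψ > 0` and `ψ' > 0`; both bounds
give the limit `2`; and since the smaller root of `Q` lies below `2x / (x + 1)`,
`(ψ' ψ)' = Q(ψ) / (2 x) ≤ 0`, so `H̃'' = (ψ' ψ) ∘ H̃` is antitone.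
-/

open MeasureTheory Topology

section DerivativeTests

variable {s : Set ℝ} {f f' : ℝ → ℝ}

lemma strictMonoOn_of_hasDerivAt_pos_of_isOpen (hs : IsOpen s) (hconv : Convex ℝ s)
    (hf : ∀ x ∈ s, HasDerivAt f (f' x) x) (hpos : ∀ x ∈ s, 0 < f' x) : StrictMonoOn f s :=
  strictMonoOn_of_hasDerivWithinAt_pos hconv
    (fun x hx => (hf x hx).continuousAt.continuousWithinAt)
    (fun x hx => by rw [hs.interior_eq] at hx ⊢; exact (hf x hx).hasDerivWithinAt)
    (by rwa [hs.interior_eq])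

lemma strictAntiOn_of_hasDerivAt_neg_of_isOpen (hs : IsOpen s) (hconv : Convex ℝ s)
    (hf : ∀ x ∈ s, HasDerivAt f (f' x) x) (hneg : ∀ x ∈ s, f' x < 0) : StrictAntiOn f s :=
  strictAntiOn_of_hasDerivWithinAt_neg hconv
    (fun x hx => (hf x hx).continuousAt.continuousWithinAt)
    (fun x hx => by rw [hs.interior_eq] at hx ⊢; exact (hf x hx).hasDerivWithinAt)
    (by rwa [hs.interior_eq])

lemma antitoneOn_of_hasDerivAt_nonpos_of_isOpen (hs : IsOpen s) (hconv : Convex ℝ s)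
    (hf : ∀ x ∈ s, HasDerivAt f (f' x) x) (hnonpos : ∀ x ∈ s, f' x ≤ 0) :
    AntitoneOn f s :=
  antitoneOn_of_hasDerivWithinAt_nonpos hconv
    (fun x hx => (hf x hx).continuousAt.continuousWithinAt)
    (fun x hx => by rw [hs.interior_eq] at hx ⊢; exact (hf x hx).hasDerivWithinAt)
    (by rwa [hs.interior_eq])

lemma concaveOn_of_hasDerivAt_of_antitoneOn (hs : IsOpen s) (hconv : Convex ℝ s)
    (hf : ∀ x ∈ s, HasDerivAt f (f' x) x) (hanti : AntitoneOn f' s) : ConcaveOn ℝ s f := by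
  refine AntitoneOn.concaveOn_of_deriv hconv
    (fun x hx => (hf x hx).continuousAt.continuousWithinAt) ?_ ?_ <;> rw [hs.interior_eq]
  · exact fun x hx => (hf x hx).differentiableAt.differentiableWithinAt
  · exact hanti.congr fun x hx => ((hf x hx).deriv).symm

end DerivativeTests

lemma StrictAntiOn.pos_of_tendsto_atTop_zero {g : ℝ → ℝ} {a x : ℝ}
    (hg : StrictAntiOn g (Ioi a)) (hlim : Tendsto g atTop (𝓝 0)) (hx : a < x) : 0 < g x := by
  have hx1 : a < x + 1 := by linarith
  have h : 0 ≤ g (x + 1) := le_of_tendsto hlim <| (eventually_ge_atTop (x + 1)).mono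
    fun y hy => hg.antitoneOn hx1 (hx1.trans_le hy) hy
  exact h.trans_lt (hg hx hx1 (lt_add_one x))

/-- The integrating factor `ρ` turns `d' < c d` into `(d ρ)' < 0`. -/
lemma pos_of_hasDerivAt_lt_mul_of_tendsto {a : ℝ} {c ρ d d' : ℝ → ℝ}
    (hρ : ∀ x ∈ Ioi a, HasDerivAt ρ (-(c x * ρ x)) x) (hρ_pos : ∀ x ∈ Ioi a, 0 < ρ x)
    (hd : ∀ x ∈ Ioi a, HasDerivAt d (d' x) x) (hlt : ∀ x ∈ Ioi a, d' x < c x * d x)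
    (hlim : Tendsto (fun x => d x * ρ x) atTop (𝓝 0)) {x : ℝ} (hx : a < x) : 0 < d x := by
  have hanti : StrictAntiOn (fun x => d x * ρ x) (Ioi a) := by
    refine strictAntiOn_of_hasDerivAt_neg_of_isOpen isOpen_Ioi (convex_Ioi a)
      (fun x hx => (hd x hx).mul (hρ x hx)) fun x hx => ?_
    nlinarith [hlt x hx, hρ_pos x hx]
  exact (mul_pos_iff_of_pos_right (hρ_pos x hx)).1 (hanti.pos_of_tendsto_atTop_zero hlim hx)

section LeftInverse

variable {K H : ℝ → ℝ} {s : Set ℝ}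

lemma strictMonoOn_of_leftInvOn (hK : StrictMonoOn K s) (hH : MapsTo H s s)
    (hKH : LeftInvOn K H s) : StrictMonoOn H s := fun v hv w hw hvw =>
  (hK.lt_iff_lt (hH hv) (hH hw)).1 (by rwa [hKH hv, hKH hw])

lemma continuousAt_of_leftInvOn (hs : IsOpen s) (hK : StrictMonoOn K s) (hKs : MapsTo K s s)
    (hH : MapsTo H s s) (hKH : LeftInvOn K H s) {v : ℝ} (hv : v ∈ s) : ContinuousAt H v := by
  have hHK : LeftInvOn H K s := hK.injOn.rightInvOn_of_leftInvOn hKH hKs hH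
  refine (strictMonoOn_of_leftInvOn hK hH hKH).continuousAt_of_image_mem_nhds
    (hs.mem_nhds hv) (mem_of_superset (hs.mem_nhds (hH hv)) fun x hx => ?_)
  exact ⟨K x, hKs hx, hHK hx⟩

lemma hasDerivAt_of_leftInvOn (hs : IsOpen s) (hK : StrictMonoOn K s) (hKs : MapsTo K s s)
    (hH : MapsTo H s s) (hKH : LeftInvOn K H s) {v k : ℝ} (hv : v ∈ s)
    (hk : HasDerivAt K k (H v)) (hk0 : k ≠ 0) : HasDerivAt H k⁻¹ v :=
  hk.of_local_left_inverse (continuousAt_of_leftInvOn hs hK hKs hH hKH hv) hk0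
    (eventually_of_mem (hs.mem_nhds hv) fun _ hw => hKH hw)

lemma tendsto_atTop_of_leftInvOn (hs : s ∈ atTop) (hK : StrictMonoOn K s) (hKs : MapsTo K s s)
    (hH : MapsTo H s s) (hKH : LeftInvOn K H s) : Tendsto H atTop atTop := by
  have hHK : LeftInvOn H K s := hK.injOn.rightInvOn_of_leftInvOn hKH hKs hH
  refine tendsto_atTop.2 fun b => ?_
  obtain ⟨x, hx, hbx⟩ := (Eventually.and hs (eventually_ge_atTop b)).exists
  filter_upwards [hs, eventually_ge_atTop (K x)] with v hv hxv
  calc b ≤ x := hbx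
    _ = H (K x) := (hHK hx).symm
    _ ≤ H v := (strictMonoOn_of_leftInvOn hK hH hKH).monotoneOn (hKs hx) hv hxv

end LeftInverse

noncomputable section

def chi1PDF (x : ℝ) : ℝ := x ^ (-(1:ℝ)/2) * exp (-x/2) / √(2 * π)

lemma chi1PDF_pos {x : ℝ} (hx : 0 < x) : 0 < chi1PDF x := by unfold chi1PDF; positivity

lemma hasDerivAt_chi1PDF {x : ℝ} (hx : 0 < x) :
    HasDerivAt chi1PDF (-((x + 1) / (2 * x) * chi1PDF x)) x := by
  have hpow := hasDerivAt_rpow_const (p := -(1:ℝ)/2) (Or.inl hx.ne')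
  have hexp := ((hasDerivAt_id x).neg.div_const 2).exp
  refine ((hpow.mul hexp).div_const √(2 * π)).congr_deriv ?_
  rw [chi1PDF, rpow_sub hx, rpow_one]
  simp only [Pi.neg_apply, id]
  field_simp
  ring

lemma integral_chi1PDF_Ioi_zero : ∫ x in Ioi 0, chi1PDF x = 1 := by
  have h := integral_rpow_mul_exp_neg_mul_rpow (p := 1) (q := -(1:ℝ)/2) (b := 1/2)
    (by norm_num) (by norm_num) (by norm_num)
  have h2 : ((1:ℝ)/2) ^ (-(-(1:ℝ)/2 + 1) / 1) = √2 := by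
    rw [show -(-(1:ℝ)/2 + 1) / 1 = -(1/2) by norm_num, rpow_neg (by norm_num),
      ← inv_rpow (by norm_num), sqrt_eq_rpow]
    norm_num
  simp only [rpow_one, h2, show (-(1:ℝ)/2 + 1) / 1 = 1/2 by norm_num, Gamma_one_half_eq,
    ← sqrt_mul zero_le_two, one_div_one, mul_one] at h
  simp only [chi1PDF, integral_div]
  rw [div_eq_one_iff_eq (by positivity), ← h]
  congr 1 with x
  ring_nf

/-- For `x < 0`, `Real.rpow` gives `x ^ (-1/2) = exp (log x * (-1/2)) * cos (-π/2) = 0`. -/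
lemma chi1PDF_of_nonpos {x : ℝ} (hx : x ≤ 0) : chi1PDF x = 0 := by
  rcases hx.lt_or_eq with hx | rfl
  · rw [chi1PDF, rpow_def_of_neg hx, show -(1:ℝ)/2 * π = -(π/2) by ring, cos_neg,
      cos_pi_div_two]
    ring
  · rw [chi1PDF, zero_rpow (by norm_num)]
    ring

lemma integrable_chi1PDF : Integrable chi1PDF := by
  have hIoi : IntegrableOn chi1PDF (Ioi 0) := by
    refine IntegrableOn.congr_fun ((integrableOn_rpow_mul_exp_neg_mul_rpow (p := 1)
      (s := -(1:ℝ)/2) (b := 1/2) (by norm_num) (by norm_num) (by norm_num)).div_const √(2 * π))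
      (fun x _ => ?_) measurableSet_Ioi
    simp only [chi1PDF, rpow_one]
    ring_nf
  rw [← integrableOn_univ, ← Iic_union_Ioi (a := 0), integrableOn_union]
  exact ⟨integrableOn_zero.congr_fun (fun x hx => (chi1PDF_of_nonpos hx).symm)
    measurableSet_Iic, hIoi⟩

lemma hasDerivAt_chi1CDF {x : ℝ} (hx : 0 < x) : HasDerivAt chi1CDF (chi1PDF x) x :=
  intervalIntegral.integral_hasDerivAt_right integrable_chi1PDF.intervalIntegrable
    integrable_chi1PDF.aestronglyMeasurable.stronglyMeasurableAtFilter
    (hasDerivAt_chi1PDF hx).continuousAt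

lemma chi1CDF_pos {x : ℝ} (hx : 0 < x) : 0 < chi1CDF x :=
  intervalIntegral.intervalIntegral_pos_of_pos_on integrable_chi1PDF.intervalIntegrable
    (fun _ ht => chi1PDF_pos ht.1) hx

lemma tendsto_chi1CDF_atTop : Tendsto chi1CDF atTop (𝓝 1) := by
  rw [← integral_chi1PDF_Ioi_zero]
  exact intervalIntegral_tendsto_integral_Ioi 0 integrable_chi1PDF.integrableOn tendsto_id

lemma tendsto_chi1PDF_atTop : Tendsto chi1PDF atTop (𝓝 0) := by
  have hbound : Tendsto (fun x : ℝ => x ^ (-(1:ℝ)/2) / √(2 * π)) atTop (𝓝 0) := by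
    simpa [neg_div] using (tendsto_rpow_neg_atTop (y := 1/2) (by norm_num)).div_const √(2 * π)
  refine tendsto_of_tendsto_of_tendsto_of_le_of_le' tendsto_const_nhds hbound ?_ ?_
  · filter_upwards [eventually_gt_atTop 0] with x hx using (chi1PDF_pos hx).le
  · filter_upwards [eventually_gt_atTop 0] with x hx
    rw [chi1PDF, mul_div_right_comm]
    refine mul_le_of_le_one_right (by positivity) (exp_le_one_iff.2 ?_)
    linarith

def chi1Tail (x : ℝ) : ℝ := 1 - chi1CDF x

lemma hasDerivAt_chi1Tail {x : ℝ} (hx : 0 < x) : HasDerivAt chi1Tail (-chi1PDF x) x :=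
  (hasDerivAt_chi1CDF hx).const_sub 1

lemma tendsto_chi1Tail_atTop : Tendsto chi1Tail atTop (𝓝 0) := by
  show Tendsto (fun x => 1 - chi1CDF x) atTop (𝓝 0)
  simpa using tendsto_chi1CDF_atTop.const_sub 1

lemma chi1Tail_pos {x : ℝ} (hx : 0 < x) : 0 < chi1Tail x :=
  (strictAntiOn_of_hasDerivAt_neg_of_isOpen isOpen_Ioi (convex_Ioi 0)
    (fun _ hy => hasDerivAt_chi1Tail hy) fun _ hy => neg_neg_of_pos (chi1PDF_pos hy)
    ).pos_of_tendsto_atTop_zero tendsto_chi1Tail_atTop hx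

lemma chi1Tail_lt_one {x : ℝ} (hx : 0 < x) : chi1Tail x < 1 := by
  simpa [chi1Tail] using chi1CDF_pos hx

def chi1Mills (x : ℝ) : ℝ := chi1Tail x / chi1PDF x

lemma chi1Mills_pos {x : ℝ} (hx : 0 < x) : 0 < chi1Mills x :=
  div_pos (chi1Tail_pos hx) (chi1PDF_pos hx)

lemma chi1Mills_mul_chi1PDF {x : ℝ} (hx : 0 < x) : chi1Mills x * chi1PDF x = chi1Tail x :=
  div_mul_cancel₀ _ (chi1PDF_pos hx).ne'

lemma hasDerivAt_chi1Mills {x : ℝ} (hx : 0 < x) :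
    HasDerivAt chi1Mills ((x + 1) / (2 * x) * chi1Mills x - 1) x := by
  have hpdf := (chi1PDF_pos hx).ne'
  refine ((hasDerivAt_chi1Tail hx).div (hasDerivAt_chi1PDF hx) hpdf).congr_deriv ?_
  rw [chi1Mills]
  field_simp
  ring

def chi1CumHazard (x : ℝ) : ℝ := -log (chi1Tail x)

lemma hasDerivAt_chi1CumHazard {x : ℝ} (hx : 0 < x) :
    HasDerivAt chi1CumHazard (chi1Mills x)⁻¹ x := by
  refine ((hasDerivAt_chi1Tail hx).log (chi1Tail_pos hx).ne').neg.congr_deriv ?_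
  rw [chi1Mills, inv_div, neg_div, neg_neg]

lemma strictMonoOn_chi1CumHazard : StrictMonoOn chi1CumHazard (Ioi 0) :=
  strictMonoOn_of_hasDerivAt_pos_of_isOpen isOpen_Ioi (convex_Ioi 0)
    (fun _ hx => hasDerivAt_chi1CumHazard hx) fun _ hx => inv_pos.2 (chi1Mills_pos hx)

lemma mapsTo_chi1CumHazard : MapsTo chi1CumHazard (Ioi 0) (Ioi 0) := fun _ hx =>
  neg_pos.2 (log_neg (chi1Tail_pos hx) (chi1Tail_lt_one hx))

lemma tendsto_mul_chi1PDF_of_abs_le {b : ℝ → ℝ} {C : ℝ}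
    (hb : ∀ x ∈ Ioi 0, |b x| ≤ C) :
    Tendsto (fun x => b x * chi1PDF x) atTop (𝓝 0) := by
  refine squeeze_zero_norm' ?_ (by simpa using tendsto_chi1PDF_atTop.const_mul C)
  filter_upwards [eventually_gt_atTop 0] with x hx
  rw [norm_mul, norm_of_nonneg (chi1PDF_pos hx).le]
  exact mul_le_mul_of_nonneg_right (hb x hx) (chi1PDF_pos hx).le

lemma lt_chi1Mills_of_hasDerivAt {b b' : ℝ → ℝ} {C : ℝ}
    (hb : ∀ x ∈ Ioi 0, HasDerivAt b (b' x) x) (hbC : ∀ x ∈ Ioi 0, |b x| ≤ C)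
    (hsub : ∀ x ∈ Ioi 0, (x + 1) / (2 * x) * b x < b' x + 1) {x : ℝ} (hx : 0 < x) :
    b x < chi1Mills x := by
  have hlim : Tendsto (fun y => (chi1Mills y - b y) * chi1PDF y) atTop (𝓝 0) := by
    have h := tendsto_chi1Tail_atTop.sub (tendsto_mul_chi1PDF_of_abs_le hbC)
    rw [sub_zero] at h
    refine h.congr' ?_
    filter_upwards [eventually_gt_atTop 0] with y hy
    rw [sub_mul, chi1Mills_mul_chi1PDF hy]
  refine sub_pos.1 (pos_of_hasDerivAt_lt_mul_of_tendsto (c := fun y => (y + 1) / (2 * y))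
    (d := fun y => chi1Mills y - b y) (fun y hy => hasDerivAt_chi1PDF hy)
    (fun y hy => chi1PDF_pos hy) (fun y hy => (hasDerivAt_chi1Mills hy).sub (hb y hy))
    (fun y hy => by rw [mul_sub]; linarith [hsub y hy]) hlim hx)

lemma chi1Mills_lt_of_hasDerivAt {b b' : ℝ → ℝ} {C : ℝ}
    (hb : ∀ x ∈ Ioi 0, HasDerivAt b (b' x) x) (hbC : ∀ x ∈ Ioi 0, |b x| ≤ C)
    (hsuper : ∀ x ∈ Ioi 0, b' x + 1 < (x + 1) / (2 * x) * b x) {x : ℝ} (hx : 0 < x) :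
    chi1Mills x < b x := by
  have hlim : Tendsto (fun y => (b y - chi1Mills y) * chi1PDF y) atTop (𝓝 0) := by
    have h := (tendsto_mul_chi1PDF_of_abs_le hbC).sub tendsto_chi1Tail_atTop
    rw [sub_zero] at h
    refine h.congr' ?_
    filter_upwards [eventually_gt_atTop 0] with y hy
    rw [sub_mul, chi1Mills_mul_chi1PDF hy]
  refine sub_pos.1 (pos_of_hasDerivAt_lt_mul_of_tendsto (c := fun y => (y + 1) / (2 * y))
    (d := fun y => b y - chi1Mills y) (fun y hy => hasDerivAt_chi1PDF hy)
    (fun y hy => chi1PDF_pos hy) (fun y hy => (hb y hy).sub (hasDerivAt_chi1Mills hy))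
    (fun y hy => by rw [mul_sub]; linarith [hsuper y hy]) hlim hx)

lemma two_mul_div_add_one_lt_chi1Mills {x : ℝ} (hx : 0 < x) : 2 * x / (x + 1) < chi1Mills x := by
  refine lt_chi1Mills_of_hasDerivAt (b := fun y => 2 * y / (y + 1))
    (b' := fun y => 2 / (y + 1) ^ 2) (C := 2) (fun y (hy : 0 < y) => ?_)
    (fun y (hy : 0 < y) => ?_) (fun y (hy : 0 < y) => ?_) hx
  · refine (((hasDerivAt_id y).const_mul 2).div ((hasDerivAt_id y).add_const 1)
      (by positivity)).congr_deriv ?_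
    simp only [id]
    field_simp
    ring
  · rw [abs_of_pos (by positivity), div_le_iff₀ (by positivity)]
    linarith
  · have h : (y + 1) / (2 * y) * (2 * y / (y + 1)) = 1 := by field_simp
    rw [h]
    linarith [show 0 < 2 / (y + 1) ^ 2 by positivity]

/-- The larger root of `p ↦ (x + 2) p ^ 2 - 3 (x + 1) p + 2 x`. -/
def chi1MillsUpper (x : ℝ) : ℝ := (3 * (x + 1) + √(x ^ 2 + 2 * x + 9)) / (2 * (x + 2))

lemma hasDerivAt_chi1MillsUpper {x : ℝ} (hx : 0 < x) :
    HasDerivAt chi1MillsUpper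
      ((3 * √(x ^ 2 + 2 * x + 9) + x - 7) / (2 * (x + 2) ^ 2 * √(x ^ 2 + 2 * x + 9))) x := by
  have hq : 0 < x ^ 2 + 2 * x + 9 := by positivity
  have hsqrt := (((hasDerivAt_pow 2 x).add ((hasDerivAt_id x).const_mul 2)).add_const 9).sqrt
    hq.ne'
  refine ((((hasDerivAt_id x).add_const 1).const_mul 3).add hsqrt |>.div
    (((hasDerivAt_id x).add_const 2).const_mul 2) (by positivity)).congr_deriv ?_
  simp only [Pi.add_apply, id]
  have hD2 := sq_sqrt hq.le
  have hD := sqrt_pos.2 hq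
  set D := √(x ^ 2 + 2 * x + 9)
  field_simp
  linear_combination (-2) * hD2

lemma cubic_mul_sqrt_lt_quartic {x : ℝ} (hx : 0 < x) :
    (x ^ 3 + 4 * x ^ 2 + 7 * x - 6) * √(x ^ 2 + 2 * x + 9)
      < x ^ 4 + 5 * x ^ 3 + 15 * x ^ 2 + 45 * x + 18 := by
  have hR : 0 < x ^ 4 + 5 * x ^ 3 + 15 * x ^ 2 + 45 * x + 18 := by positivity
  have hD := sqrt_nonneg (x ^ 2 + 2 * x + 9)
  rcases le_or_gt (x ^ 3 + 4 * x ^ 2 + 7 * x - 6) 0 with hP | hP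
  · nlinarith [mul_nonpos_of_nonpos_of_nonneg hP hD]
  refine lt_of_pow_lt_pow_left₀ 2 hR.le ?_
  rw [mul_pow, sq_sqrt (by positivity)]
  have : 0 < 64 * x ^ 5 + 352 * x ^ 4 + 1216 * x ^ 3 + 2688 * x ^ 2 + 2304 * x := by positivity
  linear_combination this

lemma deriv_chi1MillsUpper_add_one_lt {x : ℝ} (hx : 0 < x) :
    deriv chi1MillsUpper x + 1 < (x + 1) / (2 * x) * chi1MillsUpper x := by
  rw [(hasDerivAt_chi1MillsUpper hx).deriv]
  have hPD := cubic_mul_sqrt_lt_quartic hx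
  have hD2 := sq_sqrt (by positivity : 0 ≤ x ^ 2 + 2 * x + 9)
  have hD := sqrt_pos.2 (by positivity : 0 < x ^ 2 + 2 * x + 9)
  rw [chi1MillsUpper]
  set D := √(x ^ 2 + 2 * x + 9)
  rw [← sub_pos]
  have key : (x + 1) / (2 * x) * ((3 * (x + 1) + D) / (2 * (x + 2)))
      - ((3 * D + x - 7) / (2 * (x + 2) ^ 2 * D) + 1)
      = ((x ^ 4 + 5 * x ^ 3 + 15 * x ^ 2 + 45 * x + 18) - (x ^ 3 + 4 * x ^ 2 + 7 * x - 6) * D)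
        / (4 * x * (x + 2) ^ 2 * D) := by
    field_simp
    linear_combination (4 * (x + 1) * (x + 2)) * hD2
  rw [key]
  exact div_pos (by linarith) (by positivity)

lemma chi1MillsUpper_nonneg {x : ℝ} (hx : 0 < x) : 0 ≤ chi1MillsUpper x := by
  unfold chi1MillsUpper; positivity

lemma chi1MillsUpper_le_two {x : ℝ} (hx : 0 < x) : chi1MillsUpper x ≤ 2 := by
  have hD : √(x ^ 2 + 2 * x + 9) ≤ x + 3 :=
    sqrt_le_iff.2 ⟨by linarith, by nlinarith⟩
  rw [chi1MillsUpper, div_le_iff₀ (by positivity)]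
  linarith

lemma chi1Mills_lt_chi1MillsUpper {x : ℝ} (hx : 0 < x) : chi1Mills x < chi1MillsUpper x :=
  chi1Mills_lt_of_hasDerivAt (C := 2)
    (fun _ hy => (hasDerivAt_chi1MillsUpper hy).differentiableAt.hasDerivAt)
    (fun _ hy => by rw [abs_of_nonneg (chi1MillsUpper_nonneg hy)]; exact chi1MillsUpper_le_two hy)
    (fun _ hy => deriv_chi1MillsUpper_add_one_lt hy) hx

lemma quadratic_nonpos_of_le_of_le_chi1MillsUpper {x p : ℝ} (hx : 0 < x)
    (hlow : 2 * x / (x + 1) ≤ p) (hup : p ≤ chi1MillsUpper x) :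
    (x + 2) * p ^ 2 - 3 * (x + 1) * p + 2 * x ≤ 0 := by
  have hD2 := sq_sqrt (by positivity : 0 ≤ x ^ 2 + 2 * x + 9)
  have hD3 : 3 ≤ √(x ^ 2 + 2 * x + 9) :=
    le_sqrt_of_sq_le (by nlinarith)
  rw [chi1MillsUpper, le_div_iff₀ (by positivity)] at hup
  rw [div_le_iff₀ (by positivity)] at hlow
  set D := √(x ^ 2 + 2 * x + 9)
  have hA : 0 ≤ 3 * (x + 1) + D - 2 * (x + 2) * p := by linarith
  have hB : 0 ≤ 2 * (x + 2) * p - 3 * (x + 1) + D := by nlinarith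
  nlinarith [mul_nonneg hA hB]

lemma strictMonoOn_chi1Mills : StrictMonoOn chi1Mills (Ioi 0) := by
  refine strictMonoOn_of_hasDerivAt_pos_of_isOpen isOpen_Ioi (convex_Ioi 0)
    (fun _ hx => hasDerivAt_chi1Mills hx) fun x (hx : 0 < x) => ?_
  have h := mul_lt_mul_of_pos_left (two_mul_div_add_one_lt_chi1Mills hx)
    (by positivity : 0 < (x + 1) / (2 * x))
  rwa [show (x + 1) / (2 * x) * (2 * x / (x + 1)) = 1 by field_simp, ← sub_pos] at h

lemma tendsto_chi1Mills_atTop : Tendsto chi1Mills atTop (𝓝 2) := by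
  have hlow : Tendsto (fun x : ℝ => 2 * x / (x + 1)) atTop (𝓝 2) := by
    have h : Tendsto (fun x : ℝ => 2 - 2 / (x + 1)) atTop (𝓝 (2 - 0)) :=
      tendsto_const_nhds.sub (tendsto_const_nhds.div_atTop (tendsto_atTop_add_const_right _ 1
        tendsto_id))
    rw [sub_zero] at h
    refine h.congr' ?_
    filter_upwards [eventually_gt_atTop 0] with x hx
    field_simp
    ring
  refine tendsto_of_tendsto_of_tendsto_of_le_of_le' hlow tendsto_const_nhds ?_ ?_
  all_goals filter_upwards [eventually_gt_atTop 0] with x hx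
  · exact (two_mul_div_add_one_lt_chi1Mills hx).le
  · exact (chi1Mills_lt_chi1MillsUpper hx).le.trans (chi1MillsUpper_le_two hx)

/-- This is `ψ' ψ` for the Mills ratio `ψ`, i.e. `H''` expressed in the variable `x = H v`. -/
lemma antitoneOn_deriv_chi1Mills_mul_chi1Mills :
    AntitoneOn (fun x => ((x + 1) / (2 * x) * chi1Mills x - 1) * chi1Mills x) (Ioi 0) := by
  refine antitoneOn_of_hasDerivAt_nonpos_of_isOpen isOpen_Ioi (convex_Ioi 0)
    (f' := fun x => ((x + 2) * chi1Mills x ^ 2 - 3 * (x + 1) * chi1Mills x + 2 * x) / (2 * x))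
    (fun x (hx : 0 < x) => ?_) fun x (hx : 0 < x) => ?_
  · have hc : HasDerivAt (fun y => (y + 1) / (2 * y)) (-(1 / (2 * x ^ 2))) x := by
      refine (((hasDerivAt_id x).add_const 1).div ((hasDerivAt_id x).const_mul 2)
        (by positivity)).congr_deriv ?_
      simp only [id]
      field_simp
      ring
    refine (((hc.mul (hasDerivAt_chi1Mills hx)).sub_const 1).mul
      (hasDerivAt_chi1Mills hx)).congr_deriv ?_
    simp only [Pi.mul_apply]
    field_simp
    ring
  · exact div_nonpos_of_nonpos_of_nonneg (quadratic_nonpos_of_le_of_le_chi1MillsUpper hx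
      (two_mul_div_add_one_lt_chi1Mills hx).le (chi1Mills_lt_chi1MillsUpper hx).le) (by positivity)

end

/-- Properties of `H̃' = (F⁻¹ ∘ G)'` where `F` is the χ²₁ CDF and `G(v) = 1 - e^{-v}`:
`H̃'` is positive, (strictly) increasing and concave on `(0,∞)`, and `H̃'(v) → 2` as
`v → ∞`.  The function `H` is characterized on `(0,∞)` by `F(H v) = 1 - e^{-v}`, `H v > 0`. -/
theorem tildeH_deriv_properties (H : ℝ → ℝ)
    (hH : ∀ v ∈ Set.Ioi (0:ℝ), 0 < H v ∧ chi1CDF (H v) = 1 - Real.exp (-v)) :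
    (∀ v ∈ Set.Ioi (0:ℝ), 0 < deriv H v) ∧
    StrictMonoOn (deriv H) (Set.Ioi 0) ∧
    ConcaveOn ℝ (Set.Ioi 0) (deriv H) ∧
    Tendsto (deriv H) atTop (nhds 2) := by
  have hmaps : MapsTo H (Ioi 0) (Ioi 0) := fun v hv => (hH v hv).1
  have hinv : LeftInvOn chi1CumHazard H (Ioi 0) := fun v hv => by
    simp [chi1CumHazard, chi1Tail, (hH v hv).2]
  have hderiv (v : ℝ) (hv : v ∈ Ioi 0) : HasDerivAt H (chi1Mills (H v)) v := by
    simpa using hasDerivAt_of_leftInvOn isOpen_Ioi strictMonoOn_chi1CumHazard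
      mapsTo_chi1CumHazard hmaps hinv hv (hasDerivAt_chi1CumHazard (hmaps hv))
      (inv_ne_zero (chi1Mills_pos (hmaps hv)).ne')
  have hderiv_eq : EqOn (deriv H) (chi1Mills ∘ H) (Ioi 0) := fun v hv => (hderiv v hv).deriv
  have hmono : StrictMonoOn H (Ioi 0) :=
    strictMonoOn_of_leftInvOn strictMonoOn_chi1CumHazard hmaps hinv
  refine ⟨fun v hv => hderiv_eq hv ▸ chi1Mills_pos (hmaps hv),
    (strictMonoOn_chi1Mills.comp hmono hmaps).congr hderiv_eq.symm, ?_, ?_⟩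
  · refine concaveOn_of_hasDerivAt_of_antitoneOn isOpen_Ioi (convex_Ioi 0) (fun v hv => ?_)
      (antitoneOn_deriv_chi1Mills_mul_chi1Mills.comp_MonotoneOn hmono.monotoneOn hmaps)
    exact ((hasDerivAt_chi1Mills (hmaps hv)).comp v (hderiv v hv)).congr_of_eventuallyEq
      (eventually_of_mem (isOpen_Ioi.mem_nhds hv) hderiv_eq)
  · exact (tendsto_chi1Mills_atTop.comp (tendsto_atTop_of_leftInvOn (Ioi_mem_atTop 0)
      strictMonoOn_chi1CumHazard mapsTo_chi1CumHazard hmaps hinv)).congr'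
      ((eventually_of_mem (Ioi_mem_atTop 0) hderiv_eq).mono fun _ h => h.symm)
end

section
/- With $\tilde H=F^{-1}\circ G$ where $F$ is the $\chi^2_1$ CDF and $G$ the standard exponential CDF, the product $\tilde H(v)\tilde H''(v)\to 0$ as $v\to\infty$. -/
/-!
Write `J(y) = ∫_y^∞ t^{-1/2} e^{-t/2} dt`, so that `1 - F = J / √(2π)`, and let
`R(y) = √y e^{y/2} J(y)` be the Mills ratio (tail over density) of the χ²₁ law.
Differentiating `F(H̃ v) = 1 - e^{-v}` gives `H̃' = R ∘ H̃`, hence `H̃'' = (R' ∘ H̃) (R ∘ H̃)`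
with `R'(y) = R(y) (1/(2y) + 1/2) - 1`, and `H̃ H̃'' = R (R/2 + y (R - 2)/2)` at `y = H̃ v → ∞`.
Two integrations by parts give `y (R(y) - 2) = -2 + O(1/y)`, so `R → 2` and the product tends
to `2 (1 - 1) = 0`.
-/

open Filter Real Set

open MeasureTheory Topology

noncomputable def tailIntegral (p y : ℝ) : ℝ := ∫ t in Ioi y, t ^ p * exp (-t / 2)

section TailIntegral

variable {p y : ℝ}

lemma continuousAt_rpow_mul_exp_neg_half (p : ℝ) {t : ℝ} (ht : 0 < t) :
    ContinuousAt (fun t : ℝ => t ^ p * exp (-t / 2)) t :=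
  (continuousAt_rpow_const t p (Or.inl ht.ne')).mul (by fun_prop)

lemma integrableOn_rpow_mul_exp_neg_half_Ioi (p : ℝ) {a : ℝ} (ha : 0 < a) :
    IntegrableOn (fun t : ℝ => t ^ p * exp (-t / 2)) (Ioi a) := by
  refine integrable_of_isBigO_exp_neg (b := 1 / 4) (by norm_num) (fun t ht =>
    (continuousAt_rpow_mul_exp_neg_half p (ha.trans_le ht)).continuousWithinAt) ?_
  refine ((isLittleO_rpow_exp_pos_mul_atTop p (b := 1 / 4) (by norm_num)).isBigO.mul
    (Asymptotics.isBigO_refl (fun t : ℝ => exp (-t / 2)) atTop)).congr_right fun t => ?_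
  rw [← exp_add]
  ring_nf

lemma integrableOn_rpow_mul_exp_neg_half_Ioi_zero (hp : -1 < p) :
    IntegrableOn (fun t : ℝ => t ^ p * exp (-t / 2)) (Ioi 0) := by
  refine (integrableOn_rpow_mul_exp_neg_mul_rpow hp one_pos one_half_pos).congr_fun
    (fun t _ => ?_) measurableSet_Ioi
  simp only [rpow_one]
  ring_nf

lemma hasStrictDerivAt_tailIntegral (p : ℝ) (hy : 0 < y) :
    HasStrictDerivAt (tailIntegral p) (-(y ^ p * exp (-y / 2))) y := by
  have hint := integrableOn_rpow_mul_exp_neg_half_Ioi p (half_pos hy)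
  have hFTC : HasStrictDerivAt (fun u => ∫ t in (y / 2)..u, t ^ p * exp (-t / 2))
      (y ^ p * exp (-y / 2)) y :=
    intervalIntegral.integral_hasStrictDerivAt_right
      ((intervalIntegrable_iff_integrableOn_Ioc_of_le (half_lt_self hy).le).2
        (hint.mono_set Ioc_subset_Ioi_self))
      (ContinuousOn.stronglyMeasurableAtFilter isOpen_Ioi (fun t ht =>
        (continuousAt_rpow_mul_exp_neg_half p ht).continuousWithinAt) y hy)
      (continuousAt_rpow_mul_exp_neg_half p hy)
  refine (hFTC.const_sub (tailIntegral p (y / 2))).congr_of_eventuallyEq ?_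
  filter_upwards [Ioi_mem_nhds (half_lt_self hy)] with u hu
  rw [tailIntegral, tailIntegral, ← intervalIntegral.integral_Ioi_sub_Ioi hint hu.le,
    sub_sub_cancel]

lemma strictAntiOn_tailIntegral (p : ℝ) : StrictAntiOn (tailIntegral p) (Ioi 0) := by
  refine strictAntiOn_of_deriv_neg (convex_Ioi 0)
    (fun y hy => (hasStrictDerivAt_tailIntegral p hy).hasDerivAt.continuousAt.continuousWithinAt)
    fun y hy => ?_
  rw [interior_Ioi] at hy
  rw [(hasStrictDerivAt_tailIntegral p hy).hasDerivAt.deriv, neg_lt_zero]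
  exact mul_pos (rpow_pos_of_pos hy p) (exp_pos _)

lemma tailIntegral_eq (p : ℝ) (hy : 0 < y) :
    tailIntegral p y = 2 * y ^ p * exp (-y / 2) + 2 * p * tailIntegral (p - 1) y := by
  have hu : ∀ t ∈ Ioi y, HasDerivAt (fun t : ℝ => t ^ p) (p * t ^ (p - 1)) t :=
    fun t ht => hasDerivAt_rpow_const (Or.inl (hy.trans ht).ne')
  have hv : ∀ t ∈ Ioi y, HasDerivAt (fun t => -2 * exp (-t / 2)) (exp (-t / 2)) t :=
    fun t _ => (((hasDerivAt_neg t).div_const 2).exp.const_mul (-2)).congr_deriv (by ring)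
  have hu'v : IntegrableOn (fun t => p * t ^ (p - 1) * (-2 * exp (-t / 2))) (Ioi y) :=
    IntegrableOn.congr_fun ((integrableOn_rpow_mul_exp_neg_half_Ioi (p - 1) hy).const_mul (-2 * p))
      (fun t _ => by ring) measurableSet_Ioi
  have hat : ContinuousWithinAt (fun t => t ^ p * (-2 * exp (-t / 2))) (Ioi y) y :=
    ((continuousAt_rpow_const y p (Or.inl hy.ne')).mul (by fun_prop)).continuousWithinAt
  have hlim : Tendsto (fun t => t ^ p * (-2 * exp (-t / 2))) atTop (𝓝 0) := by
    convert (tendsto_rpow_mul_exp_neg_mul_atTop_nhds_zero p (1 / 2) one_half_pos).const_mul (-2)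
      using 2 <;> ring_nf
  have hIBP := integral_Ioi_mul_deriv_eq_deriv_mul hu hv
    (integrableOn_rpow_mul_exp_neg_half_Ioi p hy) hu'v hat hlim
  have hrest : ∫ t in Ioi y, p * t ^ (p - 1) * (-2 * exp (-t / 2))
      = -2 * p * tailIntegral (p - 1) y := by
    rw [tailIntegral, ← integral_const_mul]
    congr 1 with t
    ring
  rw [tailIntegral, hIBP, hrest]
  ring

lemma tailIntegral_zero (hy : 0 < y) : tailIntegral 0 y = 2 * exp (-y / 2) := by
  simpa using tailIntegral_eq 0 hy

lemma tailIntegral_add_le (p : ℝ) {r : ℝ} (hr : r ≤ 0) (hy : 0 < y) :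
    tailIntegral (p + r) y ≤ y ^ r * tailIntegral p y := by
  rw [tailIntegral, tailIntegral, ← integral_const_mul]
  refine setIntegral_mono_on (integrableOn_rpow_mul_exp_neg_half_Ioi _ hy)
    ((integrableOn_rpow_mul_exp_neg_half_Ioi p hy).const_mul _) measurableSet_Ioi fun t ht => ?_
  have ht0 : 0 < t := hy.trans ht
  rw [rpow_add ht0, mul_comm (t ^ p), mul_assoc]
  exact mul_le_mul_of_nonneg_right (rpow_le_rpow_of_nonpos hy ht.le hr) (by positivity)

lemma tailIntegral_pos (p : ℝ) (hy : 0 < y) : 0 < tailIntegral p y := by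
  rw [tailIntegral, setIntegral_pos_iff_support_of_nonneg_ae ?_
    (integrableOn_rpow_mul_exp_neg_half_Ioi p hy)]
  · have hsupp : Ioi y ⊆ Function.support fun t : ℝ => t ^ p * exp (-t / 2) := fun t ht =>
      (mul_pos (rpow_pos_of_pos (hy.trans ht) p) (exp_pos _)).ne'
    rw [inter_eq_right.2 hsupp, Real.volume_Ioi]
    exact ENNReal.zero_lt_top
  · filter_upwards [ae_restrict_mem measurableSet_Ioi] with t ht
    exact mul_nonneg (rpow_nonneg (hy.trans ht).le p) (exp_pos _).le

end TailIntegral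

lemma rpow_neg_one_half {y : ℝ} (hy : 0 ≤ y) : y ^ (-1 / 2 : ℝ) = (√y)⁻¹ := by
  rw [neg_div, rpow_neg hy, sqrt_eq_rpow]

noncomputable def millsRatio (y : ℝ) : ℝ := √y * exp (y / 2) * tailIntegral (-1 / 2) y

section MillsRatio

variable {y : ℝ}

lemma hasDerivAt_millsRatio (hy : 0 < y) :
    HasDerivAt millsRatio (millsRatio y * (1 / (2 * y) + 1 / 2) - 1) y := by
  have hexp : HasDerivAt (fun y : ℝ => exp (y / 2)) (exp (y / 2) * (1 / 2)) y :=
    (hasDerivAt_exp _).comp y ((hasDerivAt_id y).div_const 2)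
  refine (((hasDerivAt_sqrt hy.ne').mul hexp).mul
    (hasStrictDerivAt_tailIntegral (-1 / 2) hy).hasDerivAt).congr_deriv ?_
  have hss : √y * √y = y := mul_self_sqrt hy.le
  simp only [Pi.mul_apply]
  rw [millsRatio, rpow_neg_one_half hy.le, neg_div 2 y, exp_neg]
  generalize tailIntegral (-1 / 2) y = J
  field_simp
  linear_combination (-exp (y / 2) * J) * hss

lemma mul_millsRatio_sub_two_eq (hy : 0 < y) :
    y * (millsRatio y - 2) = -2 + 3 * (y * √y * exp (y / 2) * tailIntegral (-5 / 2) y) := by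
  have h1 := tailIntegral_eq (-1 / 2) hy
  have h2 := tailIntegral_eq (-1 / 2 - 1) hy
  rw [show (-1 / 2 - 1 - 1 : ℝ) = -5 / 2 by norm_num, rpow_sub_one hy.ne'] at h2
  rw [millsRatio, h1, h2, rpow_neg_one_half hy.le, neg_div 2 y, exp_neg]
  field_simp
  ring

lemma abs_mul_millsRatio_sub_two_add_two_le (hy : 0 < y) :
    |y * (millsRatio y - 2) + 2| ≤ 6 / y := by
  have hJ := tailIntegral_pos (-5 / 2) hy
  have hle := tailIntegral_add_le 0 (r := -5 / 2) (by norm_num) hy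
  have hpow : y ^ (-5 / 2 : ℝ) = (√y)⁻¹ / y / y := by
    rw [show (-5 / 2 : ℝ) = -1 / 2 - 1 - 1 by norm_num, rpow_sub_one hy.ne',
      rpow_sub_one hy.ne', rpow_neg_one_half hy.le]
  rw [zero_add, tailIntegral_zero hy, hpow] at hle
  rw [mul_millsRatio_sub_two_eq hy, neg_add_cancel_comm, abs_of_nonneg (by positivity)]
  calc 3 * (y * √y * exp (y / 2) * tailIntegral (-5 / 2) y)
      ≤ 3 * (y * √y * exp (y / 2) * ((√y)⁻¹ / y / y * (2 * exp (-y / 2)))) := by gcongr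
    _ = 6 / y := by
      rw [neg_div 2 y, exp_neg]
      field_simp
      ring

lemma tendsto_mul_millsRatio_sub_two :
    Tendsto (fun y => y * (millsRatio y - 2)) atTop (𝓝 (-2)) := by
  rw [tendsto_iff_norm_sub_tendsto_zero]
  refine squeeze_zero' (.of_forall fun _ => norm_nonneg _) ?_
    (tendsto_const_nhds.div_atTop tendsto_id : Tendsto (fun y : ℝ => 6 / y) atTop (𝓝 0))
  filter_upwards [eventually_gt_atTop 0] with y hy
  simpa using abs_mul_millsRatio_sub_two_add_two_le hy

lemma tendsto_millsRatio : Tendsto millsRatio atTop (𝓝 2) := by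
  have h := (tendsto_mul_millsRatio_sub_two.div_atTop tendsto_id).add_const 2
  rw [zero_add] at h
  refine h.congr' ?_
  filter_upwards [eventually_gt_atTop 0] with y hy
  rw [id, mul_div_cancel_left₀ _ hy.ne', sub_add_cancel]

lemma tendsto_mul_deriv_millsRatio_mul_millsRatio :
    Tendsto (fun y => y * ((millsRatio y * (1 / (2 * y) + 1 / 2) - 1) * millsRatio y))
      atTop (𝓝 0) := by
  have h := tendsto_millsRatio.mul
    ((tendsto_millsRatio.div_const 2).add (tendsto_mul_millsRatio_sub_two.div_const 2))
  rw [show (2 * (2 / 2 + -2 / 2) : ℝ) = 0 by norm_num] at h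
  refine h.congr' ?_
  filter_upwards [eventually_gt_atTop 0] with y hy
  field_simp
  ring

end MillsRatio

section ChiSquared

variable {y : ℝ}

lemma integral_rpow_neg_one_half_mul_exp_neg_half_Ioi :
    ∫ t in Ioi 0, t ^ (-1 / 2 : ℝ) * exp (-t / 2) = √(2 * π) := by
  have h := integral_rpow_mul_exp_neg_mul_Ioi (a := 1 / 2) (r := 1 / 2) one_half_pos one_half_pos
  rw [Gamma_one_half_eq, ← sqrt_eq_rpow, one_div_one_div, ← sqrt_mul zero_le_two] at h
  rw [← h]
  congr 1 with t
  ring_nf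

lemma sqrt_two_pi_mul_one_sub_chi1CDF (hy : 0 ≤ y) :
    √(2 * π) * (1 - chi1CDF y) = tailIntegral (-1 / 2) y := by
  have hint := integrableOn_rpow_mul_exp_neg_half_Ioi_zero (p := -1 / 2) (by norm_num)
  rw [chi1CDF, intervalIntegral.integral_div, ← intervalIntegral.integral_Ioi_sub_Ioi hint hy,
    integral_rpow_neg_one_half_mul_exp_neg_half_Ioi, tailIntegral]
  field_simp
  ring

lemma chi1CDF_lt_one (hy : 0 < y) : chi1CDF y < 1 := by
  have h : 0 < √(2 * π) * (1 - chi1CDF y) := by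
    rw [sqrt_two_pi_mul_one_sub_chi1CDF hy.le]
    exact tailIntegral_pos _ hy
  linarith [pos_of_mul_pos_right h (sqrt_nonneg _)]

lemma strictMonoOn_chi1CDF : StrictMonoOn chi1CDF (Ioi 0) := by
  intro a ha b hb hab
  have h := strictAntiOn_tailIntegral (-1 / 2) ha hb hab
  rw [← sqrt_two_pi_mul_one_sub_chi1CDF (le_of_lt ha),
    ← sqrt_two_pi_mul_one_sub_chi1CDF (le_of_lt hb)] at h
  linarith [lt_of_mul_lt_mul_left h (sqrt_nonneg _)]

lemma hasStrictDerivAt_chi1CDF (hy : 0 < y) :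
    HasStrictDerivAt chi1CDF (y ^ (-1 / 2 : ℝ) * exp (-y / 2) / √(2 * π)) y := by
  refine (((hasStrictDerivAt_tailIntegral (-1 / 2) hy).div_const (√(2 * π))).const_sub 1
    |>.congr_of_eventuallyEq ?_).congr_deriv (by ring)
  filter_upwards [Ioi_mem_nhds hy] with u hu
  rw [← sqrt_two_pi_mul_one_sub_chi1CDF (le_of_lt hu)]
  field_simp
  ring

end ChiSquared

/-- Injectivity of `f` on `s` forces `g = L ∘ k` near `v`, with `L` the local inverse of `f`;
so no continuity of `g` is needed. -/
lemma hasDerivAt_of_comp_eq_of_injOn {f g k : ℝ → ℝ} {s : Set ℝ} {f' k' v : ℝ} (hs : IsOpen s)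
    (hinj : InjOn f s) (hgs : ∀ᶠ w in 𝓝 v, g w ∈ s) (hfg : ∀ᶠ w in 𝓝 v, f (g w) = k w)
    (hf : HasStrictDerivAt f f' (g v)) (hf' : f' ≠ 0) (hk : HasDerivAt k k' v) :
    HasDerivAt g (f'⁻¹ * k') v := by
  set L := hf.localInverse f f' (g v) hf'
  have hkv : k v = f (g v) := hfg.self_of_nhds.symm
  have hL : HasStrictDerivAt L f'⁻¹ (f (g v)) := hf.to_localInverse hf'
  have hLg : L (f (g v)) = g v := (hf.eventually_left_inverse hf').self_of_nhds
  have hkt : Tendsto k (𝓝 v) (𝓝 (f (g v))) := hkv ▸ hk.continuousAt.tendsto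
  have hLs : ∀ᶠ y in 𝓝 (f (g v)), L y ∈ s :=
    hL.hasDerivAt.continuousAt.preimage_mem_nhds <| by
      rw [hLg]
      exact hs.mem_nhds hgs.self_of_nhds
  refine ((hkv ▸ hL.hasDerivAt).comp v hk).congr_of_eventuallyEq ?_
  filter_upwards [hgs, hfg, hkt.eventually hLs, hkt.eventually (hf.eventually_right_inverse hf')]
    with w hgw hfgw hLw hfLw
  exact hinj hgw hLw (hfgw.trans hfLw.symm)

section QuantileTransform

variable {H : ℝ → ℝ} (hH : ∀ v ∈ Ioi (0 : ℝ), 0 < H v ∧ chi1CDF (H v) = 1 - exp (-v))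
include hH

lemma tendsto_atTop_of_chi1CDF_eq : Tendsto H atTop atTop := by
  refine tendsto_atTop.2 fun M => ?_
  have hM : 0 < max M 1 := lt_max_of_lt_right one_pos
  have hG : Tendsto (fun v : ℝ => 1 - exp (-v)) atTop (𝓝 1) := by
    simpa using (tendsto_exp_neg_atTop_nhds_zero).const_sub 1
  filter_upwards [hG.eventually_const_lt (chi1CDF_lt_one hM), eventually_gt_atTop 0]
    with v hv hv0
  obtain ⟨hpos, heq⟩ := hH v hv0
  rw [← heq, strictMonoOn_chi1CDF.lt_iff_lt hM hpos] at hv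
  exact (le_max_left M 1).trans hv.le

lemma hasDerivAt_of_chi1CDF_eq {v : ℝ} (hv : 0 < v) : HasDerivAt H (millsRatio (H v)) v := by
  obtain ⟨hpos, heq⟩ := hH v hv
  have hdens : H v ^ (-1 / 2 : ℝ) * exp (-H v / 2) / √(2 * π) ≠ 0 := by positivity
  have hG : HasDerivAt (fun w => 1 - exp (-w)) (exp (-v)) v := by
    simpa using ((hasDerivAt_neg v).exp).const_sub 1
  have hHv : ∀ᶠ w in 𝓝 v, 0 < H w ∧ chi1CDF (H w) = 1 - exp (-w) := by
    filter_upwards [Ioi_mem_nhds hv] with w hw using hH w hw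
  refine (hasDerivAt_of_comp_eq_of_injOn isOpen_Ioi strictMonoOn_chi1CDF.injOn
    (hHv.mono fun w hw => hw.1) (hHv.mono fun w hw => hw.2) (hasStrictDerivAt_chi1CDF hpos)
    hdens hG).congr_deriv ?_
  have htail := sqrt_two_pi_mul_one_sub_chi1CDF hpos.le
  rw [heq, sub_sub_cancel] at htail
  rw [millsRatio, ← htail, rpow_neg_one_half hpos.le, neg_div 2 (H v), exp_neg]
  field_simp

lemma deriv_deriv_eq_of_chi1CDF_eq {v : ℝ} (hv : 0 < v) :
    deriv (deriv H) v
      = (millsRatio (H v) * (1 / (2 * H v) + 1 / 2) - 1) * millsRatio (H v) := by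
  have hderiv : deriv H =ᶠ[𝓝 v] millsRatio ∘ H := by
    filter_upwards [Ioi_mem_nhds hv] with w hw using (hasDerivAt_of_chi1CDF_eq hH hw).deriv
  rw [hderiv.deriv_eq]
  exact ((hasDerivAt_millsRatio (hH v hv).1).comp v (hasDerivAt_of_chi1CDF_eq hH hv)).deriv

end QuantileTransform

/-- With `H̃ = F⁻¹ ∘ G` (`F` the χ²₁ CDF, `G` standard exponential CDF),
`H̃(v)·H̃''(v) → 0` as `v → ∞`. -/
theorem tildeH_times_second_deriv_tendsto_zero (H : ℝ → ℝ)
    (hH : ∀ v ∈ Set.Ioi (0:ℝ), 0 < H v ∧ chi1CDF (H v) = 1 - Real.exp (-v)) :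
    Tendsto (fun v => H v * deriv (deriv H) v) atTop (nhds 0) := by
  refine (tendsto_mul_deriv_millsRatio_mul_millsRatio.comp
    (tendsto_atTop_of_chi1CDF_eq hH)).congr' ?_
  filter_upwards [eventually_gt_atTop 0] with v hv
  rw [Function.comp_apply, deriv_deriv_eq_of_chi1CDF_eq hH hv]
end

section
/- Fix $M\ge 0$ and a sequence $v_a\to\infty$, and let $\tilde H_{a,M}(v)=G_{a,M}^{-1}(1-e^{-v})$ where $G_{a,M}$ is the noncentral $\chi^2_1(M^2/a)$ CDF. Then $\tilde H_{a,M}'$ is bounded uniformly on the relevant ranges, and $\tilde H_{a,M}'(v)\to 2$ as $v\to\infty$ and $a\to\infty$. -/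
/-!
Write `s = √y`, `c = M / √a ∈ [0, M]`, and let `φ`, `Q` be the standard normal density and
upper tail. Then `1 - G_{a,M}(y) = Q(s - c) + Q(s + c)` and
`g_{a,M}(y) = (φ(s - c) + φ(s + c)) / (2s)`, and the inverse function theorem gives
`H̃'(v) = e^{-v} / g(H̃(v)) = (1 - G) / g` at `y = H̃(v)`, that is
`2s (Q(s - c) + Q(s + c)) / (φ(s - c) + φ(s + c))`.
The Mills ratio bounds `t φ(t) / (t² + 1) ≤ Q(t) ≤ φ(t) / t` squeeze this between
`2s (s - M) / ((s + M)² + 1)` and `2s / (s - M)`, which both tend to `2`; and `H̃(v) → ∞`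
uniformly in `a` because `Q(√H̃(v)) ≤ e^{-v}`. For bounded `s` the ratio stays bounded since
`Q ≤ 1` and `φ` is bounded below on compact sets.
-/

open MeasureTheory ProbabilityTheory Filter Real Set Topology

/-- The noncentral chi-squared distribution with 1 degree of freedom and noncentrality
`M²/a`: the law of `(Z + M/√a)²` for `Z ∼ N(0,1)`. -/
noncomputable def ncChiSq (a : ℕ) (M : ℝ) : Measure ℝ :=
  Measure.map (fun z => (z + M / Real.sqrt a) ^ 2) (gaussianReal 0 1)

/-- The CDF of the noncentral χ²₁(M²/a) distribution. -/
noncomputable def ncCDF (a : ℕ) (M y : ℝ) : ℝ := ((ncChiSq a M) (Set.Iic y)).toReal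

theorem continuousAt_of_strictMonoOn_of_leftInverse {α β : Type*} [LinearOrder α]
    [TopologicalSpace α] [OrderTopology α] [DenselyOrdered α] [LinearOrder β]
    [TopologicalSpace β] [OrderTopology β] {F : α → β} {H : β → α} {s : Set α} {x₀ : β}
    (hF : StrictMonoOn F s) (hs : s ∈ 𝓝 (H x₀)) (hFH : ∀ᶠ x in 𝓝 x₀, H x ∈ s ∧ F (H x) = x) :
    ContinuousAt H x₀ := by
  obtain ⟨hx₀s, hx₀⟩ := hFH.self_of_nhds
  rw [ContinuousAt, tendsto_order]
  constructor
  · intro a ha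
    obtain ⟨l, hl, hls⟩ := exists_Ioc_subset_of_mem_nhds hs ⟨a, ha⟩
    obtain ⟨y, hy₁, hy₂⟩ := exists_between (max_lt ha hl)
    have hys : y ∈ s := hls ⟨(le_max_right _ _).trans_lt hy₁, hy₂.le⟩
    have hFy : F y < x₀ := hx₀ ▸ hF hys hx₀s hy₂
    filter_upwards [hFH, eventually_gt_nhds hFy] with x ⟨hxs, hx⟩ hlt
    exact (le_max_left _ _).trans_lt (hy₁.trans ((hF.lt_iff_lt hys hxs).1 (by rwa [hx])))
  · intro a ha
    obtain ⟨u, hu, hus⟩ := exists_Ico_subset_of_mem_nhds hs ⟨a, ha⟩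
    obtain ⟨y, hy₁, hy₂⟩ := exists_between (lt_min ha hu)
    have hys : y ∈ s := hus ⟨hy₁.le, hy₂.trans_le (min_le_right _ _)⟩
    have hFy : x₀ < F y := hx₀ ▸ hF hx₀s hys hy₁
    filter_upwards [hFH, eventually_lt_nhds hFy] with x ⟨hxs, hx⟩ hlt
    exact ((hF.lt_iff_lt hxs hys).1 (by rwa [hx])).trans (hy₂.trans_le (min_le_left _ _))

theorem HasDerivAt.of_strictMonoOn_of_leftInverse {F H : ℝ → ℝ} {s : Set ℝ} {x₀ F' : ℝ}
    (hF' : HasDerivAt F F' (H x₀)) (hF'₀ : F' ≠ 0) (hF : StrictMonoOn F s) (hs : s ∈ 𝓝 (H x₀))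
    (hFH : ∀ᶠ x in 𝓝 x₀, H x ∈ s ∧ F (H x) = x) : HasDerivAt H F'⁻¹ x₀ :=
  hF'.of_local_left_inverse (continuousAt_of_strictMonoOn_of_leftInverse hF hs hFH) hF'₀
    (hFH.mono fun _ h => h.2)

noncomputable def stdNormalPDF (x : ℝ) : ℝ := (√(2 * π))⁻¹ * exp (-x ^ 2 / 2)

noncomputable def stdNormalTail (t : ℝ) : ℝ := ∫ x in Ioi t, stdNormalPDF x

lemma stdNormalPDF_eq_gaussianPDFReal : stdNormalPDF = gaussianPDFReal 0 1 := by
  ext x; simp [stdNormalPDF, gaussianPDFReal, neg_div]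

lemma stdNormalPDF_pos (x : ℝ) : 0 < stdNormalPDF x := by
  have := pi_pos
  unfold stdNormalPDF; positivity

lemma stdNormalPDF_neg (x : ℝ) : stdNormalPDF (-x) = stdNormalPDF x := by
  simp [stdNormalPDF]

lemma stdNormalPDF_le_of_sq_le {s t : ℝ} (h : s ^ 2 ≤ t ^ 2) : stdNormalPDF t ≤ stdNormalPDF s := by
  unfold stdNormalPDF
  gcongr

lemma continuous_stdNormalPDF : Continuous stdNormalPDF := by
  unfold stdNormalPDF; fun_prop

lemma integrable_stdNormalPDF : Integrable stdNormalPDF := by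
  rw [stdNormalPDF_eq_gaussianPDFReal]; exact integrable_gaussianPDFReal 0 1

lemma integral_stdNormalPDF : ∫ x, stdNormalPDF x = 1 := by
  rw [stdNormalPDF_eq_gaussianPDFReal]; exact integral_gaussianPDFReal_eq_one 0 one_ne_zero

lemma hasDerivAt_stdNormalPDF (x : ℝ) : HasDerivAt stdNormalPDF (-x * stdNormalPDF x) x := by
  have h : HasDerivAt (fun y : ℝ => -y ^ 2 / 2) (-x) x :=
    (((hasDerivAt_pow 2 x).neg).div_const 2).congr_deriv (by simp only [Nat.cast_ofNat]; ring)
  exact ((h.exp).const_mul (√(2 * π))⁻¹).congr_deriv (by rw [stdNormalPDF]; ring)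

lemma tendsto_stdNormalPDF_atTop : Tendsto stdNormalPDF atTop (𝓝 0) := by
  have h : Tendsto (fun x : ℝ => -x ^ 2 / 2) atTop atBot :=
    (tendsto_neg_atTop_atBot.comp (tendsto_pow_atTop two_ne_zero)).atBot_div_const two_pos
  have := (tendsto_exp_atBot.comp h).const_mul (√(2 * π))⁻¹
  rwa [mul_zero] at this

lemma integrable_mul_stdNormalPDF : Integrable fun x => x * stdNormalPDF x := by
  convert (integrable_mul_exp_neg_mul_sq (b := 1 / 2) (by norm_num)).const_mul (√(2 * π))⁻¹
    using 2 with x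
  rw [stdNormalPDF]; ring_nf

lemma stdNormalTail_nonneg (t : ℝ) : 0 ≤ stdNormalTail t :=
  setIntegral_nonneg measurableSet_Ioi fun x _ => (stdNormalPDF_pos x).le

lemma stdNormalTail_le_one (t : ℝ) : stdNormalTail t ≤ 1 :=
  integral_stdNormalPDF ▸ setIntegral_le_integral integrable_stdNormalPDF
    (ae_of_all _ fun x => (stdNormalPDF_pos x).le)

lemma stdNormalTail_antitone : Antitone stdNormalTail := fun _ _ hst =>
  setIntegral_mono_set integrable_stdNormalPDF.integrableOn
    (ae_of_all _ fun x => (stdNormalPDF_pos x).le) (ae_of_all _ (Ioi_subset_Ioi hst))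

lemma stdNormalTail_neg (t : ℝ) : stdNormalTail (-t) = 1 - stdNormalTail t := by
  rw [eq_sub_iff_add_eq, stdNormalTail, stdNormalTail, ← integral_comp_neg_Iic]
  simp_rw [stdNormalPDF_neg]
  rw [← setIntegral_union (Iic_disjoint_Ioi le_rfl) measurableSet_Ioi
    integrable_stdNormalPDF.integrableOn integrable_stdNormalPDF.integrableOn, Iic_union_Ioi,
    setIntegral_univ, integral_stdNormalPDF]

lemma setIntegral_Icc_stdNormalPDF {a b : ℝ} (hab : a ≤ b) :
    ∫ x in Icc a b, stdNormalPDF x = stdNormalTail a - stdNormalTail b := by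
  rw [stdNormalTail, stdNormalTail, intervalIntegral.integral_Ioi_sub_Ioi
    integrable_stdNormalPDF.integrableOn hab, intervalIntegral.integral_of_le hab,
    integral_Icc_eq_integral_Ioc]

lemma hasDerivAt_stdNormalTail (t : ℝ) : HasDerivAt stdNormalTail (-stdNormalPDF t) t := by
  have h : stdNormalTail = fun u => stdNormalTail 0 - ∫ x in (0 : ℝ)..u, stdNormalPDF x := by
    funext u
    rw [stdNormalTail, stdNormalTail, ← intervalIntegral.integral_Ioi_sub_Ioi'
      integrable_stdNormalPDF.integrableOn integrable_stdNormalPDF.integrableOn, sub_sub_cancel]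
  rw [h]
  exact (intervalIntegral.integral_hasDerivAt_right integrable_stdNormalPDF.intervalIntegrable
    (continuous_stdNormalPDF.stronglyMeasurableAtFilter _ _)
    continuous_stdNormalPDF.continuousAt).const_sub _

lemma integral_Ioi_mul_stdNormalPDF (t : ℝ) :
    ∫ x in Ioi t, x * stdNormalPDF x = stdNormalPDF t := by
  have h := integral_Ioi_of_hasDerivAt_of_tendsto' (a := t) (f := fun x => -stdNormalPDF x)
    (m := -0)
    (fun x _ => (hasDerivAt_stdNormalPDF x).neg.congr_deriv (by ring))
    integrable_mul_stdNormalPDF.integrableOn tendsto_stdNormalPDF_atTop.neg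
  rw [h]; ring

lemma stdNormalTail_le_div {t : ℝ} (ht : 0 < t) : stdNormalTail t ≤ stdNormalPDF t / t := by
  rw [← integral_Ioi_mul_stdNormalPDF, ← integral_div]
  refine setIntegral_mono_on integrable_stdNormalPDF.integrableOn
    (integrable_mul_stdNormalPDF.div_const t).integrableOn measurableSet_Ioi fun x hx => ?_
  rw [le_div_iff₀ ht, mul_comm x]
  exact mul_le_mul_of_nonneg_left (le_of_lt hx) (stdNormalPDF_pos x).le

lemma mul_div_le_stdNormalTail (t : ℝ) : t * stdNormalPDF t / (t ^ 2 + 1) ≤ stdNormalTail t := by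
  set ρ : ℝ → ℝ := fun x => stdNormalPDF x - 2 * stdNormalPDF x / (x ^ 2 + 1) ^ 2
  have hderiv (x : ℝ) : HasDerivAt (fun x => -(x / (x ^ 2 + 1) * stdNormalPDF x)) (ρ x) x := by
    have hq : HasDerivAt (fun x : ℝ => x / (x ^ 2 + 1)) ((1 - x ^ 2) / (x ^ 2 + 1) ^ 2) x := by
      refine ((hasDerivAt_id x).div ((hasDerivAt_pow 2 x).add_const 1)
        (by positivity)).congr_deriv ?_
      simp only [id, Nat.cast_ofNat]; ring
    refine ((hq.mul (hasDerivAt_stdNormalPDF x)).neg).congr_deriv ?_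
    simp only [ρ]; field_simp; ring
  have hρ_le (x : ℝ) : ρ x ≤ stdNormalPDF x := by
    have := stdNormalPDF_pos x
    simp only [ρ]; linarith [show 0 ≤ 2 * stdNormalPDF x / (x ^ 2 + 1) ^ 2 by positivity]
  have hρ_int : Integrable ρ := by
    refine integrable_stdNormalPDF.sub ((integrable_stdNormalPDF.const_mul 2).mono'
      ((continuous_stdNormalPDF.const_mul 2).div (by fun_prop)
        fun x => by positivity).aestronglyMeasurable (ae_of_all _ fun x => ?_))
    have := stdNormalPDF_pos x
    rw [norm_of_nonneg (by positivity)]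
    exact div_le_self (by positivity) (one_le_pow₀ (by nlinarith))
  have hlim : Tendsto (fun x => -(x / (x ^ 2 + 1) * stdNormalPDF x)) atTop (𝓝 0) := by
    rw [← neg_zero]
    refine (squeeze_zero' ?_ ?_ tendsto_stdNormalPDF_atTop).neg
    all_goals filter_upwards [eventually_ge_atTop 0] with x hx
    · have := stdNormalPDF_pos x; positivity
    · exact mul_le_of_le_one_left (stdNormalPDF_pos x).le
        (div_le_one_of_le₀ (by nlinarith) (by positivity))
  have h := integral_Ioi_of_hasDerivAt_of_tendsto' (a := t) (fun x _ => hderiv x)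
    hρ_int.integrableOn hlim
  calc t * stdNormalPDF t / (t ^ 2 + 1) = ∫ x in Ioi t, ρ x := by rw [h]; ring
    _ ≤ stdNormalTail t := setIntegral_mono_on hρ_int.integrableOn
        integrable_stdNormalPDF.integrableOn measurableSet_Ioi fun x _ => hρ_le x

lemma stdNormalTail_pos (t : ℝ) : 0 < stdNormalTail t := by
  have := stdNormalPDF_pos (|t| + 1)
  calc 0 < (|t| + 1) * stdNormalPDF (|t| + 1) / ((|t| + 1) ^ 2 + 1) := by positivity
    _ ≤ stdNormalTail (|t| + 1) := mul_div_le_stdNormalTail _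
    _ ≤ stdNormalTail t := stdNormalTail_antitone (by linarith [le_abs_self t])

lemma stdNormalTail_le_inv_mul {r t : ℝ} (hr : 0 < r) (hrt : r ≤ t) :
    stdNormalTail t ≤ r⁻¹ * stdNormalPDF t := by
  calc stdNormalTail t ≤ stdNormalPDF t / t := stdNormalTail_le_div (hr.trans_le hrt)
    _ ≤ stdNormalPDF t / r := div_le_div_of_nonneg_left (stdNormalPDF_pos t).le hr hrt
    _ = r⁻¹ * stdNormalPDF t := by ring

lemma div_mul_le_stdNormalTail {r R t : ℝ} (hr : 0 ≤ r) (hrt : r ≤ t) (htR : t ≤ R) :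
    r / (R ^ 2 + 1) * stdNormalPDF t ≤ stdNormalTail t := by
  have := stdNormalPDF_pos t
  calc r / (R ^ 2 + 1) * stdNormalPDF t ≤ t / (t ^ 2 + 1) * stdNormalPDF t := by
        gcongr <;> exact hr.trans hrt
    _ = t * stdNormalPDF t / (t ^ 2 + 1) := by ring
    _ ≤ stdNormalTail t := mul_div_le_stdNormalTail t

-- With `c = M / √a` and `y > 0`: `ncTail c y = 1 - G_{a,M}(y)`, `ncDensity c y = g_{a,M}(y)`,
-- so that `H̃'(v) = ncMills c (H̃ v)`.
noncomputable def ncTail (c y : ℝ) : ℝ := stdNormalTail (√y - c) + stdNormalTail (√y + c)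

noncomputable def ncDensity (c y : ℝ) : ℝ :=
  (stdNormalPDF (√y - c) + stdNormalPDF (√y + c)) / (2 * √y)

noncomputable def ncMills (c y : ℝ) : ℝ := ncTail c y / ncDensity c y

lemma ncCDF_eq_one_sub_ncTail (a : ℕ) (M : ℝ) {y : ℝ} (hy : 0 ≤ y) :
    ncCDF a M y = 1 - ncTail (M / √a) y := by
  set c := M / √a
  have hpre : (fun z : ℝ => (z + c) ^ 2) ⁻¹' Iic y = Icc (-(√y + c)) (√y - c) := by
    ext z
    simp only [mem_preimage, mem_Iic, mem_Icc, ← sqrt_le_sqrt_iff hy, sqrt_sq_eq_abs, abs_le]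
    constructor <;> rintro ⟨h₁, h₂⟩ <;> constructor <;> linarith
  have hle : -(√y + c) ≤ √y - c := by linarith [sqrt_nonneg y]
  rw [ncCDF, ncChiSq, Measure.map_apply (by fun_prop) measurableSet_Iic, hpre,
    gaussianReal_apply_eq_integral 0 one_ne_zero, ← stdNormalPDF_eq_gaussianPDFReal,
    ENNReal.toReal_ofReal (setIntegral_nonneg measurableSet_Icc fun x _ => (stdNormalPDF_pos x).le),
    setIntegral_Icc_stdNormalPDF hle, stdNormalTail_neg, ncTail]
  ring

lemma hasDerivAt_ncTail (c : ℝ) {y : ℝ} (hy : 0 < y) :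
    HasDerivAt (ncTail c) (-ncDensity c y) y := by
  have hsqrt := hasDerivAt_sqrt hy.ne'
  have h := ((hasDerivAt_stdNormalTail _).comp y (hsqrt.sub_const c)).add
    ((hasDerivAt_stdNormalTail _).comp y (hsqrt.add_const c))
  refine h.congr_deriv ?_
  rw [ncDensity]; ring

lemma ncTail_pos (c y : ℝ) : 0 < ncTail c y :=
  add_pos (stdNormalTail_pos _) (stdNormalTail_pos _)

lemma ncDensity_pos (c : ℝ) {y : ℝ} (hy : 0 < y) : 0 < ncDensity c y := by
  have := stdNormalPDF_pos (√y - c)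
  have := stdNormalPDF_pos (√y + c)
  have := sqrt_pos.2 hy
  rw [ncDensity]; positivity

lemma stdNormalTail_sqrt_le_ncTail {c : ℝ} (hc : 0 ≤ c) (y : ℝ) :
    stdNormalTail √y ≤ ncTail c y := by
  have := stdNormalTail_antitone (show √y - c ≤ √y by linarith)
  have := stdNormalTail_nonneg (√y + c)
  rw [ncTail]; linarith

lemma ncMills_eq (c y : ℝ) :
    ncMills c y = 2 * √y * ncTail c y / (stdNormalPDF (√y - c) + stdNormalPDF (√y + c)) := by
  rw [ncMills, ncDensity, div_div_eq_mul_div]; ring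

lemma ncMills_nonneg (c y : ℝ) : 0 ≤ ncMills c y := by
  have := ncTail_pos c y
  have := stdNormalPDF_pos (√y - c)
  have := stdNormalPDF_pos (√y + c)
  rw [ncMills_eq]; positivity

lemma ncMills_le_of_ncTail_le {c y R : ℝ}
    (h₁ : stdNormalTail (√y - c) ≤ R * stdNormalPDF (√y - c))
    (h₂ : stdNormalTail (√y + c) ≤ R * stdNormalPDF (√y + c)) :
    ncMills c y ≤ 2 * √y * R := by
  have := stdNormalPDF_pos (√y - c)
  have := stdNormalPDF_pos (√y + c)
  rw [ncMills_eq, div_le_iff₀ (by positivity), ncTail]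
  have := mul_le_mul_of_nonneg_left (add_le_add h₁ h₂) (by positivity : 0 ≤ 2 * √y)
  linarith

lemma le_ncMills_of_le_ncTail {c y r : ℝ}
    (h₁ : r * stdNormalPDF (√y - c) ≤ stdNormalTail (√y - c))
    (h₂ : r * stdNormalPDF (√y + c) ≤ stdNormalTail (√y + c)) :
    2 * √y * r ≤ ncMills c y := by
  have := stdNormalPDF_pos (√y - c)
  have := stdNormalPDF_pos (√y + c)
  rw [ncMills_eq, le_div_iff₀ (by positivity), ncTail]
  have := mul_le_mul_of_nonneg_left (add_le_add h₁ h₂) (by positivity : 0 ≤ 2 * √y)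
  linarith

lemma ncMills_le_of_lt_sqrt {M c y : ℝ} (hc : c ∈ Icc 0 M) (hy : M < √y) :
    ncMills c y ≤ 2 * √y / (√y - M) := by
  have hpos : 0 < √y - M := by linarith
  rw [div_eq_mul_inv]
  exact ncMills_le_of_ncTail_le (stdNormalTail_le_inv_mul hpos (by linarith [hc.2]))
    (stdNormalTail_le_inv_mul hpos (by linarith [hc.1, hc.2]))

lemma le_ncMills_of_le_sqrt {M c y : ℝ} (hc : c ∈ Icc 0 M) (hy : M ≤ √y) :
    2 * √y * (√y - M) / ((√y + M) ^ 2 + 1) ≤ ncMills c y := by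
  have hnn : 0 ≤ √y - M := by linarith
  rw [mul_div_assoc]
  exact le_ncMills_of_le_ncTail
    (div_mul_le_stdNormalTail hnn (by linarith [hc.2]) (by linarith [hc.1, hc.2]))
    (div_mul_le_stdNormalTail hnn (by linarith [hc.1, hc.2]) (by linarith [hc.2]))

lemma exists_forall_ncMills_le (M : ℝ) :
    ∃ C, ∀ c ∈ Icc 0 M, ∀ y, ncMills c y ≤ C := by
  refine ⟨max (2 * (M + 1) / stdNormalPDF (2 * M + 1)) (2 * (M + 1)), fun c ⟨hc₀, hcM⟩ y => ?_⟩
  have hs := sqrt_nonneg y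
  rcases le_or_gt √y (M + 1) with hy | hy
  · have hφ := stdNormalPDF_pos (2 * M + 1)
    have hQ {t : ℝ} (ht : t ^ 2 ≤ (2 * M + 1) ^ 2) :
        stdNormalTail t ≤ (stdNormalPDF (2 * M + 1))⁻¹ * stdNormalPDF t := by
      rw [inv_mul_eq_div, le_div_iff₀ hφ, ← one_mul (stdNormalPDF t)]
      exact mul_le_mul (stdNormalTail_le_one t) (stdNormalPDF_le_of_sq_le ht) hφ.le zero_le_one
    refine (ncMills_le_of_ncTail_le (hQ ?_) (hQ ?_)).trans (le_max_of_le_left ?_)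
    · exact sq_le_sq' (by linarith) (by linarith)
    · exact sq_le_sq' (by linarith) (by linarith)
    · rw [← div_eq_mul_inv]; gcongr
  · refine (ncMills_le_of_lt_sqrt ⟨hc₀, hcM⟩ (by linarith)).trans (le_max_of_le_right ?_)
    rw [div_le_iff₀ (by linarith)]
    nlinarith

lemma tendsto_two_mul_div_sub_atTop (M : ℝ) :
    Tendsto (fun s : ℝ => 2 * s / (s - M)) atTop (𝓝 2) := by
  have h : Tendsto (fun s : ℝ => 2 / (1 - M * s⁻¹)) atTop (𝓝 (2 / (1 - M * 0))) :=
    tendsto_const_nhds.div (tendsto_const_nhds.sub (tendsto_inv_atTop_zero.const_mul M))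
      (by simp)
  rw [mul_zero, sub_zero, div_one] at h
  refine h.congr' ?_
  filter_upwards [eventually_gt_atTop (max M 0)] with s hs
  have := (le_max_right M 0).trans_lt hs
  have := (le_max_left M 0).trans_lt hs
  field_simp

lemma tendsto_two_mul_mul_sub_div_atTop (M : ℝ) :
    Tendsto (fun s : ℝ => 2 * s * (s - M) / ((s + M) ^ 2 + 1)) atTop (𝓝 2) := by
  have hu := tendsto_inv_atTop_zero (𝕜 := ℝ)
  have h : Tendsto (fun s : ℝ => 2 * (1 - M * s⁻¹) / ((1 + M * s⁻¹) ^ 2 + s⁻¹ ^ 2)) atTop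
      (𝓝 (2 * (1 - M * 0) / ((1 + M * 0) ^ 2 + 0 ^ 2))) :=
    ((tendsto_const_nhds.sub (hu.const_mul M)).const_mul 2).div
      (((tendsto_const_nhds.add (hu.const_mul M)).pow 2).add (hu.pow 2)) (by simp)
  norm_num at h
  refine h.congr' ?_
  filter_upwards [eventually_gt_atTop 0] with s hs
  field_simp

lemma tendsto_ncMills (M : ℝ) :
    Tendsto (fun p : ℝ × ℝ => ncMills p.1 p.2) (𝓟 (Icc 0 M) ×ˢ atTop) (𝓝 2) := by
  have hlim {f : ℝ → ℝ} (hf : Tendsto f atTop (𝓝 2)) :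
      Tendsto (fun p : ℝ × ℝ => f √p.2) (𝓟 (Icc 0 M) ×ˢ atTop) (𝓝 2) :=
    hf.comp (tendsto_sqrt_atTop.comp tendsto_snd)
  have hev : ∀ᶠ p : ℝ × ℝ in 𝓟 (Icc 0 M) ×ˢ atTop, p.1 ∈ Icc 0 M ∧ M < √p.2 :=
    (eventually_principal.2 fun _ h => h).prod_mk (tendsto_sqrt_atTop.eventually_gt_atTop M)
  refine tendsto_of_tendsto_of_tendsto_of_le_of_le' (hlim (tendsto_two_mul_mul_sub_div_atTop M))
    (hlim (tendsto_two_mul_div_sub_atTop M)) ?_ ?_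
  all_goals filter_upwards [hev] with p hp
  exacts [le_ncMills_of_le_sqrt hp.1 hp.2.le, ncMills_le_of_lt_sqrt hp.1 hp.2]

lemma hasDerivAt_of_ncTail_eq_exp {c : ℝ} {H : ℝ → ℝ}
    (hH : ∀ v > 0, 0 < H v ∧ ncTail c (H v) = exp (-v)) {v₀ : ℝ} (hv₀ : 0 < v₀) :
    HasDerivAt H (ncMills c (H v₀)) v₀ := by
  have hF (y : ℝ) (hy : 0 < y) :
      HasDerivAt (fun y => -log (ncTail c y)) (ncDensity c y / ncTail c y) y := by
    refine ((hasDerivAt_ncTail c hy).log (ncTail_pos c y).ne').neg.congr_deriv ?_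
    ring
  have hmono : StrictMonoOn (fun y => -log (ncTail c y)) (Ioi 0) := by
    refine strictMonoOn_of_deriv_pos (convex_Ioi 0)
      (fun y hy => (hF y hy).continuousAt.continuousWithinAt) fun y hy => ?_
    rw [interior_Ioi] at hy
    rw [(hF y hy).deriv]
    exact div_pos (ncDensity_pos c hy) (ncTail_pos c y)
  have hFH : ∀ᶠ v in 𝓝 v₀, H v ∈ Ioi 0 ∧ -log (ncTail c (H v)) = v := by
    filter_upwards [Ioi_mem_nhds hv₀] with v hv
    rw [(hH v hv).2, log_exp, neg_neg]
    exact ⟨(hH v hv).1, rfl⟩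
  have hb := (hH v₀ hv₀).1
  simpa only [ncMills, inv_div] using (hF _ hb).of_strictMonoOn_of_leftInverse
    (div_pos (ncDensity_pos c hb) (ncTail_pos c _)).ne' hmono (Ioi_mem_nhds hb) hFH

lemma tendsto_atTop_of_ncTail_eq_exp {ι : Type*} {l : Filter ι} {c v y : ι → ℝ}
    (hv : Tendsto v l atTop) (hcy : ∀ᶠ i in l, 0 ≤ c i ∧ ncTail (c i) (y i) = exp (-v i)) :
    Tendsto y l atTop := by
  refine tendsto_atTop.2 fun b => ?_
  have hQ := stdNormalTail_pos √b
  filter_upwards [hcy, (tendsto_exp_neg_atTop_nhds_zero.comp hv).eventually_lt_const hQ]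
    with i ⟨hc, hi⟩ hlt
  by_contra! hyb
  have := stdNormalTail_antitone (sqrt_le_sqrt hyb.le)
  have := stdNormalTail_sqrt_le_ncTail hc (y i)
  rw [Function.comp_apply] at hlt
  linarith

/-- The derivative `H̃'_{a,M}` of `H̃_{a,M}(v) = G_{a,M}⁻¹(1 - e^{-v})` is uniformly
bounded (over `a ≥ 1` and `v > 0`), and `H̃'_{a,M}(v) → 2` as `v → ∞` and `a → ∞`. -/
theorem tildeH_deriv_bounded_and_tendsto_two (M : ℝ) (hM : 0 ≤ M)
    (H : ℕ → ℝ → ℝ)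
    (hH : ∀ a : ℕ, 1 ≤ a → ∀ v ∈ Set.Ioi (0:ℝ),
      0 < H a v ∧ ncCDF a M (H a v) = 1 - Real.exp (-v)) :
    (∃ C : ℝ, ∀ a : ℕ, 1 ≤ a → ∀ v ∈ Set.Ioi (0:ℝ), |deriv (H a) v| ≤ C) ∧
    Tendsto (fun p : ℕ × ℝ => deriv (H p.1) p.2) (atTop ×ˢ atTop) (nhds 2) := by
  have hc (a : ℕ) (ha : 1 ≤ a) : M / √a ∈ Icc 0 M :=
    ⟨by positivity, div_le_self hM (one_le_sqrt.2 (by exact_mod_cast ha))⟩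
  have hTail (a : ℕ) (ha : 1 ≤ a) (v : ℝ) (hv : 0 < v) :
      0 < H a v ∧ ncTail (M / √a) (H a v) = exp (-v) := by
    obtain ⟨hpos, hcdf⟩ := hH a ha v hv
    rw [ncCDF_eq_one_sub_ncTail a M hpos.le] at hcdf
    exact ⟨hpos, by linarith⟩
  have hderiv (a : ℕ) (ha : 1 ≤ a) (v : ℝ) (hv : 0 < v) :
      deriv (H a) v = ncMills (M / √a) (H a v) :=
    (hasDerivAt_of_ncTail_eq_exp (hTail a ha) hv).deriv
  obtain ⟨C, hC⟩ := exists_forall_ncMills_le M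
  refine ⟨⟨C, fun a ha v hv => ?_⟩, ?_⟩
  · rw [hderiv a ha v hv, abs_of_nonneg (ncMills_nonneg _ _)]
    exact hC _ (hc a ha) _
  have hev : ∀ᶠ p : ℕ × ℝ in atTop ×ˢ atTop, 1 ≤ p.1 ∧ 0 < p.2 :=
    (eventually_ge_atTop 1).prod_mk (eventually_gt_atTop 0)
  have hHtop : Tendsto (fun p : ℕ × ℝ => H p.1 p.2) (atTop ×ˢ atTop) atTop :=
    tendsto_atTop_of_ncTail_eq_exp tendsto_snd (hev.mono fun p hp =>
      ⟨(hc p.1 hp.1).1, (hTail p.1 hp.1 p.2 hp.2).2⟩)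
  have hargs : Tendsto (fun p : ℕ × ℝ => (M / √p.1, H p.1 p.2)) (atTop ×ˢ atTop)
      (𝓟 (Icc 0 M) ×ˢ atTop) :=
    (tendsto_principal.2 (hev.mono fun p hp => hc p.1 hp.1)).prodMk hHtop
  refine ((tendsto_ncMills M).comp hargs).congr' ?_
  filter_upwards [hev] with p hp
  exact (hderiv p.1 hp.1 p.2 hp.2).symm
end
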